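/- Let p, q ∈ ℂ with 0 < |p| < 1 and q ≠ 0, and let L = {pᵐ qⁿ : m, n ∈ ℤ}. Then for every x ∈ ℂ, x ≠ 0, with x ∉ L, the S-matrix function of the deformed Virasoro algebra admits the second Riemann factorization S_TT(x) = f(x p) · f(x⁻¹ p⁻¹)⁻¹. (This alternative factorization yields the new quadratic relation on the deformed Virasoro generators involving the fused fields T₂^q and T₂^{p/q}.) -/

import Mathlib

/-- The infinite product `(a; b)_∞ = ∏_{n ≥ 0} (1 - a bⁿ)`. -/
noncomputable def qPoch (a b : ℂ) : ℂ := ∏' n : ℕ, (1 - a * b ^ n)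

/-- The structure function `f(x)` of the deformed Virasoro algebra (formula (6)):
`f(x) = (1-x)⁻¹ (xq; p²)_∞ (xpq⁻¹; p²)_∞ / ((xpq; p²)_∞ (xp²q⁻¹; p²)_∞)`. -/
noncomputable def fDV (p q x : ℂ) : ℂ :=
  (1 - x)⁻¹ * (qPoch (x * q) (p ^ 2) * qPoch (x * p * q⁻¹) (p ^ 2)) /
    (qPoch (x * p * q) (p ^ 2) * qPoch (x * p ^ 2 * q⁻¹) (p ^ 2))

/-- `θ_a(x) = ∏_{n ≥ 1} (1 - x a^{n-1})(1 - x⁻¹ aⁿ)(1 - aⁿ)`. -/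
noncomputable def theta (a x : ℂ) : ℂ :=
  ∏' n : ℕ, ((1 - x * a ^ n) * (1 - x⁻¹ * a ^ (n + 1)) * (1 - a ^ (n + 1)))

/-- The S-matrix function of the deformed Virasoro algebra:
`S_TT(x) = θ_{p²}(xp) θ_{p²}(xq⁻¹) θ_{p²}(xp⁻¹q) / (θ_{p²}(xp⁻¹) θ_{p²}(xq) θ_{p²}(xpq⁻¹))`. -/
noncomputable def STT (p q x : ℂ) : ℂ :=
  theta (p ^ 2) (x * p) * theta (p ^ 2) (x * q⁻¹) * theta (p ^ 2) (x * p⁻¹ * q) /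
    (theta (p ^ 2) (x * p⁻¹) * theta (p ^ 2) (x * q) * theta (p ^ 2) (x * p * q⁻¹))

/-!
Write `P(y) = (y; p²)_∞`. Splitting the factors of `θ_{p²}` gives `θ_{p²}(y) = P(y) P(p²/y) P(p²)`,
and with `P(y) = (1 - y) P(y p²)` this yields the quasi-periodicity `θ_{p²}(y p²) = -y⁻¹ θ_{p²}(y)`.
In `f(y) / f(1/y)` the eight Pochhammer symbols pair up into four theta functions, so
`f(y) / f(1/y) = -y⁻¹ θ(yq) θ(yp/q) / (θ(ypq) θ(yp²/q))`. At `y = xp` all four arguments are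
`p²` times an argument occurring in `S_TT(x)`, and quasi-periodicity turns both sides into
`-(p/x) θ(x/q) θ(xq/p) / (θ(xq) θ(xp/q))`.
-/

section QPochhammer

variable {a : ℂ}

lemma summable_norm_mul_pow (y : ℂ) (ha : ‖a‖ < 1) : Summable fun n : ℕ => ‖y * a ^ n‖ := by
  simpa [norm_mul, norm_pow] using (summable_geometric_of_lt_one (norm_nonneg a) ha).mul_left ‖y‖

lemma multipliable_one_sub_mul_pow (y : ℂ) (ha : ‖a‖ < 1) :
    Multipliable fun n : ℕ => 1 - y * a ^ n := by
  simpa [sub_eq_add_neg] using multipliable_one_add_of_summable (f := fun n : ℕ => -(y * a ^ n))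
    (by simpa using summable_norm_mul_pow y ha)

lemma qPoch_ne_zero {y : ℂ} (ha : ‖a‖ < 1) (hy : ∀ n : ℕ, 1 - y * a ^ n ≠ 0) :
    qPoch y a ≠ 0 := by
  simpa [qPoch, sub_eq_add_neg] using tprod_one_add_ne_zero_of_summable
    (f := fun n : ℕ => -(y * a ^ n)) (by simpa [sub_eq_add_neg] using hy)
    (by simpa using summable_norm_mul_pow y ha)

lemma qPoch_self_ne_zero (ha : ‖a‖ < 1) : qPoch a a ≠ 0 := by
  refine qPoch_ne_zero ha fun n h => ?_
  have : ‖a ^ (n + 1)‖ < 1 := by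
    rw [norm_pow]; exact pow_lt_one₀ (norm_nonneg a) ha n.succ_ne_zero
  rw [pow_succ', ← sub_eq_zero.mp h] at this
  simp at this

lemma qPoch_eq_one_sub_mul (y : ℂ) (ha : ‖a‖ < 1) : qPoch y a = (1 - y) * qPoch (y * a) a := by
  have hshift : (fun n : ℕ => 1 - y * a ^ (n + 1)) = fun n => 1 - y * a * a ^ n := by
    funext n; ring
  rw [qPoch, tprod_eq_zero_mul' (by rw [hshift]; exact multipliable_one_sub_mul_pow _ ha), hshift]
  simp [qPoch]

lemma theta_eq_qPoch (y : ℂ) (ha : ‖a‖ < 1) :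
    theta a y = qPoch y a * qPoch (y⁻¹ * a) a * qPoch a a := by
  have h := fun y => multipliable_one_sub_mul_pow y ha
  rw [qPoch, qPoch, qPoch, ← (h y).tprod_mul (h _), ← ((h y).mul (h _)).tprod_mul (h a), theta]
  congr 1; funext n; ring

lemma theta_mul_base {y : ℂ} (ha : ‖a‖ < 1) (ha0 : a ≠ 0) (hy : y ≠ 0) :
    theta a (y * a) = -y⁻¹ * theta a y := by
  rw [theta_eq_qPoch _ ha, theta_eq_qPoch _ ha, mul_inv, inv_mul_cancel_right₀ ha0,
    qPoch_eq_one_sub_mul y⁻¹ ha, qPoch_eq_one_sub_mul y ha]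
  field_simp
  ring

end QPochhammer

def pqLattice (p q : ℂ) : Set ℂ := {y | ∃ m n : ℤ, y = p ^ m * q ^ n}

namespace pqLattice

variable {p q y z : ℂ}

lemma one_mem : (1 : ℂ) ∈ pqLattice p q := ⟨0, 0, by simp⟩

lemma left_mem : p ∈ pqLattice p q := ⟨1, 0, by simp⟩

lemma right_mem : q ∈ pqLattice p q := ⟨0, 1, by simp⟩

lemma inv_mem (hy : y ∈ pqLattice p q) : y⁻¹ ∈ pqLattice p q := by
  obtain ⟨m, n, rfl⟩ := hy
  exact ⟨-m, -n, by rw [mul_inv, zpow_neg, zpow_neg]⟩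

lemma mul_mem (hp : p ≠ 0) (hq : q ≠ 0) (hy : y ∈ pqLattice p q) (hz : z ∈ pqLattice p q) :
    y * z ∈ pqLattice p q := by
  obtain ⟨m, n, rfl⟩ := hy
  obtain ⟨m', n', rfl⟩ := hz
  exact ⟨m + m', n + n', by rw [zpow_add₀ hp, zpow_add₀ hq]; ring⟩

lemma pow_mem (hp : p ≠ 0) (hq : q ≠ 0) (hy : y ∈ pqLattice p q) (k : ℕ) :
    y ^ k ∈ pqLattice p q := by
  induction k with
  | zero => simpa using one_mem
  | succ k ih => rw [pow_succ]; exact mul_mem hp hq ih hy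

lemma ne_zero_of_mem (hp : p ≠ 0) (hq : q ≠ 0) (hy : y ∈ pqLattice p q) : y ≠ 0 := by
  obtain ⟨m, n, rfl⟩ := hy
  exact mul_ne_zero (zpow_ne_zero m hp) (zpow_ne_zero n hq)

lemma mul_mem_iff (hp : p ≠ 0) (hq : q ≠ 0) (hz : z ∈ pqLattice p q) :
    y * z ∈ pqLattice p q ↔ y ∈ pqLattice p q := by
  refine ⟨fun h => ?_, fun h => mul_mem hp hq h hz⟩
  simpa [ne_zero_of_mem hp hq hz] using mul_mem hp hq h (inv_mem hz)

lemma inv_mem_iff : y⁻¹ ∈ pqLattice p q ↔ y ∈ pqLattice p q :=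
  ⟨fun h => by simpa using inv_mem h, inv_mem⟩

lemma one_sub_ne_zero (hy : y ∉ pqLattice p q) : 1 - y ≠ 0 :=
  fun h => hy (sub_eq_zero.mp h ▸ one_mem)

end pqLattice

section StructureFunction

open pqLattice

variable {p q y : ℂ}

lemma norm_sq_lt_one (hp1 : ‖p‖ < 1) : ‖p ^ 2‖ < 1 := by
  rw [norm_pow]; exact pow_lt_one₀ (norm_nonneg p) hp1 two_ne_zero

lemma qPoch_ne_zero_of_notMem (hp : p ≠ 0) (hq : q ≠ 0) (hp1 : ‖p‖ < 1)
    (hy : y ∉ pqLattice p q) : qPoch y (p ^ 2) ≠ 0 :=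
  qPoch_ne_zero (norm_sq_lt_one hp1) fun n => one_sub_ne_zero <| by
    rwa [mul_mem_iff hp hq (pow_mem hp hq (pow_mem hp hq left_mem 2) n)]

lemma theta_ne_zero_of_notMem (hp : p ≠ 0) (hq : q ≠ 0) (hp1 : ‖p‖ < 1)
    (hy : y ∉ pqLattice p q) : theta (p ^ 2) y ≠ 0 := by
  rw [theta_eq_qPoch y (norm_sq_lt_one hp1)]
  refine mul_ne_zero (mul_ne_zero (qPoch_ne_zero_of_notMem hp hq hp1 hy)
    (qPoch_ne_zero_of_notMem hp hq hp1 ?_)) (qPoch_self_ne_zero (norm_sq_lt_one hp1))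
  rwa [mul_mem_iff hp hq (pow_mem hp hq left_mem 2), inv_mem_iff]

lemma fDV_mul_inv_fDV_inv (hp : p ≠ 0) (hp1 : ‖p‖ < 1) (hy0 : y ≠ 0) (hy1 : y ≠ 1) :
    fDV p q y * (fDV p q y⁻¹)⁻¹ =
      -y⁻¹ * (theta (p ^ 2) (y * q) * theta (p ^ 2) (y * p * q⁻¹)) /
        (theta (p ^ 2) (y * p * q) * theta (p ^ 2) (y * p ^ 2 * q⁻¹)) := by
  have ha := norm_sq_lt_one hp1
  have hP : qPoch (p ^ 2) (p ^ 2) ≠ 0 := qPoch_self_ne_zero ha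
  have h1y : 1 - y ≠ 0 := sub_ne_zero.mpr hy1.symm
  simp only [fDV, theta_eq_qPoch _ ha]
  field_simp
  ring

end StructureFunction

open pqLattice in
/-- Second Riemann factorization of the S-matrix function of the deformed Virasoro
algebra: for `x ∉ L = pᶻqᶻ`, `S_TT(x) = f(xp) · f(x⁻¹p⁻¹)⁻¹`. -/
theorem STT_second_riemann_factorization
    (p q x : ℂ) (hp0 : 0 < ‖p‖) (hp1 : ‖p‖ < 1) (hq : q ≠ 0)
    (hx : x ≠ 0) (hxL : ¬ ∃ m n : ℤ, x = p ^ m * q ^ n) :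
    STT p q x = fDV p q (x * p) * (fDV p q (x⁻¹ * p⁻¹))⁻¹ := by
  have hp : p ≠ 0 := norm_pos_iff.mp hp0
  have notMem {z : ℂ} (hz : z ∈ pqLattice p q) : x * z ∉ pqLattice p q := by
    rwa [mul_mem_iff hp hq hz]
  have hxp : x * p ≠ 1 := fun h => notMem left_mem (h ▸ one_mem)
  have shift {y z : ℂ} (hy : y ≠ 0) (hz : z = y * p ^ 2) :
      theta (p ^ 2) z = -y⁻¹ * theta (p ^ 2) y :=
    hz ▸ theta_mul_base (norm_sq_lt_one hp1) (pow_ne_zero 2 hp) hy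
  rw [← mul_inv, fDV_mul_inv_fDV_inv hp hp1 (mul_ne_zero hx hp) hxp, STT,
    shift (z := x * p) (y := x * p⁻¹) (by simp [hx, hp]) (by field_simp),
    shift (z := x * p * q) (y := x * p⁻¹ * q) (by simp [hx, hp, hq]) (by field_simp),
    shift (z := x * p * p * q⁻¹) (y := x * q⁻¹) (by simp [hx, hq]) (by ring),
    shift (z := x * p * p * q) (y := x * q) (by simp [hx, hq]) (by ring),
    shift (z := x * p * p ^ 2 * q⁻¹) (y := x * p * q⁻¹) (by simp [hx, hp, hq]) (by ring)]
  have h1 := theta_ne_zero_of_notMem hp hq hp1 (notMem (inv_mem left_mem))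
  have h2 := theta_ne_zero_of_notMem hp hq hp1 (notMem right_mem)
  have h3 : theta (p ^ 2) (x * p * q⁻¹) ≠ 0 := by
    simpa [mul_assoc] using
      theta_ne_zero_of_notMem hp hq hp1 (notMem (mul_mem hp hq left_mem (inv_mem right_mem)))
  -- `field_simp` would rewrite the arguments `x * p⁻¹`, … inside `theta` and lose track of `h1`–`h3`.
  generalize theta (p ^ 2) (x * p⁻¹) = A at h1 ⊢
  generalize theta (p ^ 2) (x * q) = B at h2 ⊢
  generalize theta (p ^ 2) (x * p * q⁻¹) = C at h3 ⊢
  field_simp
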